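/- Let 0 ≤ α < n, 1 < p < n/α and 1/q = 1/p − α/n. Let A be an invertible n×n real matrix and let w be a weight. If w ∈ 𝒜_{A,p,q}, then w(Ax) ≤ [w]_{𝒜_{A,p,q}} w(x) for almost every x ∈ ℝ^n. -/

import Mathlib

open MeasureTheory Set ENNReal

namespace Paper

/-- An axis-parallel (half-open) cube in `ℝⁿ`. -/
structure Cube (n : ℕ) where
  corner : Fin n → ℝ
  side : ℝ
  side_pos : 0 < side

namespace Cube

variable {n : ℕ}

/-- The underlying set of a cube. -/
def set (Q : Cube n) : Set (Fin n → ℝ) :=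
  {x | ∀ i, Q.corner i ≤ x i ∧ x i < Q.corner i + Q.side}

/-- The volume `|Q| = side ^ n` of a cube. -/
noncomputable def vol (Q : Cube n) : ℝ := Q.side ^ n

/-- The concentric dilate `λQ` of a cube (same center, side multiplied by `l > 0`). -/
noncomputable def dilate (Q : Cube n) (l : ℝ) (hl : 0 < l) : Cube n :=
  ⟨fun i => Q.corner i + Q.side / 2 - l * Q.side / 2, l * Q.side, mul_pos hl Q.side_pos⟩

/-- The concentric triple `3Q` of a cube. -/
noncomputable def tri (Q : Cube n) : Cube n :=
  ⟨fun i => Q.corner i - Q.side, 3 * Q.side, by have := Q.side_pos; linarith⟩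

end Cube

variable {n : ℕ}

/-- The conjugate exponent `p' = p/(p-1)`. -/
noncomputable def conj (p : ℝ) : ℝ := p / (p - 1)

/-- The Euclidean length of a vector of `Fin n → ℝ`. -/
noncomputable def elen (x : Fin n → ℝ) : ℝ := Real.sqrt (∑ i, x i ^ 2)

/-- The (extended-real valued) weighted norm `‖f‖_{L^p(u)} = (∫ |f|^p u)^{1/p}`. -/
noncomputable def lpNorm (p : ℝ) (u f : (Fin n → ℝ) → ℝ) : ℝ≥0∞ :=
  (∫⁻ x, ENNReal.ofReal (|f x| ^ p * u x)) ^ (1 / p)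

/-- Membership `f ∈ L^p(u)` for a weight `u`. -/
def MemLpW (p : ℝ) (u f : (Fin n → ℝ) → ℝ) : Prop :=
  Measurable f ∧ lpNorm p u f < ⊤

/-- The fractional maximal operator
`M_α f(x) = sup_{Q ∋ x} |Q|^{α/n-1} ∫_Q |f|`. -/
noncomputable def frMax (α : ℝ) (f : (Fin n → ℝ) → ℝ) (x : Fin n → ℝ) : ℝ≥0∞ :=
  ⨆ Q : {Q : Cube n // x ∈ Q.set},
    ENNReal.ofReal (Q.1.vol ^ (α / n - 1)) * ∫⁻ y in Q.1.set, ENNReal.ofReal |f y|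

/-- The maximal operator `M_{α,s} f(x) = sup_{Q ∋ x} |Q|^{α/n} ((1/|Q|)∫_Q |f|^s)^{1/s}`. -/
noncomputable def frMaxS (α s : ℝ) (f : (Fin n → ℝ) → ℝ) (x : Fin n → ℝ) : ℝ≥0∞ :=
  ⨆ Q : {Q : Cube n // x ∈ Q.set},
    ENNReal.ofReal (Q.1.vol ^ (α / n)) *
      ((ENNReal.ofReal Q.1.vol)⁻¹ * ∫⁻ y in Q.1.set, ENNReal.ofReal (|f y| ^ s)) ^ (1 / s)

/-- The quantity whose supremum over all cubes is `[w]_{𝒜_{A,p,q}}`; for `p = 1`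
the second factor is `‖w⁻¹‖_{L^∞(Q)}`. -/
noncomputable def apqE (A : Matrix (Fin n) (Fin n) ℝ) (p q : ℝ)
    (w : (Fin n → ℝ) → ℝ) (Q : Cube n) : ℝ≥0∞ :=
  ((ENNReal.ofReal Q.vol)⁻¹ * ∫⁻ x in Q.set, ENNReal.ofReal (w (A.mulVec x)) ^ q) ^ (1 / q) *
    (if p = 1 then essSup (fun x => (ENNReal.ofReal (w x))⁻¹) (volume.restrict Q.set)
     else ((ENNReal.ofReal Q.vol)⁻¹ *
        ∫⁻ x in Q.set, ENNReal.ofReal (w x) ^ (-conj p)) ^ (1 / conj p))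

/-- The constant `[w]_{𝒜_{A,p,q}}`. -/
noncomputable def apqConst (A : Matrix (Fin n) (Fin n) ℝ) (p q : ℝ)
    (w : (Fin n → ℝ) → ℝ) : ℝ≥0∞ :=
  ⨆ Q : Cube n, apqE A p q w Q

/-- Membership in the class `𝒜_{A,p,q}`. -/
def MemApq (A : Matrix (Fin n) (Fin n) ℝ) (p q : ℝ) (w : (Fin n → ℝ) → ℝ) : Prop :=
  apqConst A p q w < ⊤

/-- The quantity whose supremum over all cubes is `[w]_{𝒜_{A,p}}`; for `p = 1` the
second factor is `‖w⁻¹‖_{L^∞(Q)}`. -/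
noncomputable def apE (A : Matrix (Fin n) (Fin n) ℝ) (p : ℝ)
    (w : (Fin n → ℝ) → ℝ) (Q : Cube n) : ℝ≥0∞ :=
  ((ENNReal.ofReal Q.vol)⁻¹ * ∫⁻ x in Q.set, ENNReal.ofReal (w (A.mulVec x))) *
    (if p = 1 then essSup (fun x => (ENNReal.ofReal (w x))⁻¹) (volume.restrict Q.set)
     else ((ENNReal.ofReal Q.vol)⁻¹ *
        ∫⁻ x in Q.set, ENNReal.ofReal (w x) ^ (1 - conj p)) ^ (p - 1))

/-- The constant `[w]_{𝒜_{A,p}}`. -/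
noncomputable def apConst (A : Matrix (Fin n) (Fin n) ℝ) (p : ℝ)
    (w : (Fin n → ℝ) → ℝ) : ℝ≥0∞ :=
  ⨆ Q : Cube n, apE A p w Q

/-- Membership in the class `𝒜_{A,p}`. -/
def MemAp (A : Matrix (Fin n) (Fin n) ℝ) (p : ℝ) (w : (Fin n → ℝ) → ℝ) : Prop :=
  apConst A p w < ⊤

/-- The quantity `v(Q)^{-1/p} (∫_Q M_α(χ_Q v)^q u)^{1/q}` whose supremum over all
cubes is the Sawyer testing constant `[u,v]_{ℳ_{α,p,q}}`. -/
noncomputable def sawyerE (α p q : ℝ) (u v : (Fin n → ℝ) → ℝ) (Q : Cube n) : ℝ≥0∞ :=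
  ((∫⁻ x in Q.set, ENNReal.ofReal (v x)) ^ (1 / p))⁻¹ *
    (∫⁻ x in Q.set, (frMax α (Q.set.indicator v) x) ^ q * ENNReal.ofReal (u x)) ^ (1 / q)

/-- The Sawyer testing constant `[u,v]_{ℳ_{α,p,q}}`. -/
noncomputable def sawyerConst (α p q : ℝ) (u v : (Fin n → ℝ) → ℝ) : ℝ≥0∞ :=
  ⨆ Q : Cube n, sawyerE α p q u v Q

/-- Membership of a pair of weights in the Sawyer class `ℳ_{α,p,q}`. -/
def MemSawyer (α p q : ℝ) (u v : (Fin n → ℝ) → ℝ) : Prop :=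
  sawyerConst α p q u v < ⊤

/-- The averaged norm `‖g‖_{r,|x|∼t}` over the annulus `t < |x| ≤ 2t`
(essential supremum when `r = ∞`). -/
noncomputable def annNorm (r : ℝ≥0∞) (g : (Fin n → ℝ) → ℝ) (t : ℝ) : ℝ≥0∞ :=
  if r = ⊤ then
    essSup (fun x => ENNReal.ofReal |g x|)
      (volume.restrict {x | t < elen x ∧ elen x ≤ 2 * t})
  else
    ((volume {x : Fin n → ℝ | elen x < 2 * t})⁻¹ *
      ∫⁻ x in {x | t < elen x ∧ elen x ≤ 2 * t}, ENNReal.ofReal (|g x| ^ r.toReal)) ^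
        (1 / r.toReal)

/-- The fractional size condition `K ∈ S_{β,r}`. -/
def SizeCond (β : ℝ) (r : ℝ≥0∞) (K : (Fin n → ℝ) → ℝ) : Prop :=
  ∃ C : ℝ, 0 < C ∧ ∀ t : ℝ, 0 < t →
    annNorm r K t ≤ ENNReal.ofReal (C * t ^ (β - n))

/-- The generalized fractional Hörmander condition `K ∈ H_{β,r}`. -/
def HormCond (β : ℝ) (r : ℝ≥0∞) (K : (Fin n → ℝ) → ℝ) : Prop :=
  ∃ c : ℝ, 1 < c ∧ ∃ C : ℝ, 0 < C ∧ ∀ x : Fin n → ℝ, ∀ R : ℝ, c * elen x < R →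
    (∑' m : ℕ, ENNReal.ofReal (((2 : ℝ) ^ (m + 1) * R) ^ ((n : ℝ) - β)) *
      annNorm r (fun y => K (y - x) - K y) (2 ^ (m + 1) * R)) ≤ ENNReal.ofReal C

/-- The integral operator `T_{α,m} f(x) = ∫ k_1(x-A_1y) ⋯ k_m(x-A_my) f(y) dy`. -/
noncomputable def intOp (m : ℕ) (k : Fin m → (Fin n → ℝ) → ℝ)
    (A : Fin m → Matrix (Fin n) (Fin n) ℝ) (f : (Fin n → ℝ) → ℝ) (x : Fin n → ℝ) : ℝ :=
  ∫ y, (∏ i, k i (x - (A i).mulVec y)) * f y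

/-- Hypothesis (H): the matrices `A i` and `A i - A j` (`i ≠ j`) are invertible. -/
def HypH (m : ℕ) (A : Fin m → Matrix (Fin n) (Fin n) ℝ) : Prop :=
  (∀ i, (A i).det ≠ 0) ∧ ∀ i j, i ≠ j → (A i - A j).det ≠ 0

/-- `T` is of strong type `(p,p)` (with respect to Lebesgue measure). -/
def StrongType (p : ℝ) (T : ((Fin n → ℝ) → ℝ) → (Fin n → ℝ) → ℝ) : Prop :=
  ∃ C : ℝ, 0 < C ∧ ∀ f : (Fin n → ℝ) → ℝ, Measurable f →
    lpNorm p (fun _ => 1) (T f) ≤ ENNReal.ofReal C * lpNorm p (fun _ => 1) f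

/-- Bounded, measurable and compactly supported functions. -/
def BddCompactSupp (f : (Fin n → ℝ) → ℝ) : Prop :=
  Measurable f ∧ (∃ M : ℝ, ∀ x, |f x| ≤ M) ∧ HasCompactSupport f

/-- A dyadic lattice: any two cubes are nested or disjoint, every cube is the union of
its children (the cubes of the family of half its side length contained in it), and
every cube has a parent of twice its side length. -/
def IsDyadicLattice (𝒟 : Set (Cube n)) : Prop :=
  (∀ Q ∈ 𝒟, ∀ Q' ∈ 𝒟, Q.set ⊆ Q'.set ∨ Q'.set ⊆ Q.set ∨ Disjoint Q.set Q'.set) ∧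
  (∀ Q ∈ 𝒟, (⋃ P ∈ {P | P ∈ 𝒟 ∧ P.side = Q.side / 2 ∧ P.set ⊆ Q.set}, P.set) = Q.set) ∧
  (∀ Q ∈ 𝒟, ∃ Q' ∈ 𝒟, Q'.side = 2 * Q.side ∧ Q.set ⊆ Q'.set)

/-- An `η`-sparse family of cubes. -/
def IsSparse (η : ℝ) (𝒮 : Set (Cube n)) : Prop :=
  ∃ E : Cube n → Set (Fin n → ℝ),
    (∀ Q ∈ 𝒮, E Q ⊆ Q.set ∧ MeasurableSet (E Q) ∧ ENNReal.ofReal (η * Q.vol) ≤ volume (E Q)) ∧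
    𝒮.PairwiseDisjoint E

/-- The sparse operator `𝒜_{α,s,𝒮} f(x) = Σ_{Q ∈ 𝒮} |Q|^{α/n} (avg_Q |f|^s)^{1/s} χ_Q(x)`. -/
noncomputable def sparseOp (α s : ℝ) (𝒮 : Set (Cube n)) (f : (Fin n → ℝ) → ℝ)
    (x : Fin n → ℝ) : ℝ≥0∞ :=
  ∑' Q : 𝒮, Set.indicator (Q : Cube n).set
    (fun _ => ENNReal.ofReal ((Q : Cube n).vol ^ (α / n)) *
      ((ENNReal.ofReal (Q : Cube n).vol)⁻¹ *
        ∫⁻ y in (Q : Cube n).set, ENNReal.ofReal (|f y| ^ s)) ^ (1 / s)) x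

/-- The quantity whose sup over `R ∈ 𝒟` is the outer testing constant `𝒯_{A,r,out,𝒟}`. -/
noncomputable def testOutE (α p q r : ℝ) (𝒟 : Set (Cube n))
    (A : Matrix (Fin n) (Fin n) ℝ) (u v : (Fin n → ℝ) → ℝ) (R : Cube n) : ℝ≥0∞ :=
  ((∫⁻ x in R.set, ENNReal.ofReal (v x)) ^ (1 / p))⁻¹ *
    (∫⁻ x, (∑' Q : {Q : Cube n // Q ∈ 𝒟 ∧ R.set ⊆ Q.set},
        Set.indicator Q.1.set (fun _ =>
          ENNReal.ofReal (Q.1.vol ^ (α / n - 1 / r)) *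
            (∫⁻ y in Q.1.set, ENNReal.ofReal (R.set.indicator v y)) ^ (1 / r)) x) ^ q *
      ENNReal.ofReal (u (A.mulVec x))) ^ (1 / q)

/-- The quantity whose sup over `R ∈ 𝒟` is the dual outer testing constant `𝒯*_{A,r,out,𝒟}`. -/
noncomputable def testOutStarE (α p q r : ℝ) (𝒟 : Set (Cube n))
    (A : Matrix (Fin n) (Fin n) ℝ) (u v : (Fin n → ℝ) → ℝ) (R : Cube n) : ℝ≥0∞ :=
  ((∫⁻ x in R.set, ENNReal.ofReal (u (A.mulVec x))) ^ (1 / conj q))⁻¹ *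
    (∫⁻ x, (∑' Q : {Q : Cube n // Q ∈ 𝒟 ∧ R.set ⊆ Q.set},
        Set.indicator Q.1.set (fun _ =>
          ENNReal.ofReal (Q.1.vol ^ (α / n - 1 / r)) *
            (∫⁻ y in Q.1.set, ENNReal.ofReal (v y)) ^ (1 / r - 1) *
            (∫⁻ y in Q.1.set, ENNReal.ofReal (R.set.indicator
              (fun z => u (A.mulVec z)) y))) x) ^ conj p *
      ENNReal.ofReal (v x)) ^ (1 / conj p)

/-- The outer testing constant `𝒯_{A,r,out,𝒟}`. -/
noncomputable def testOutConst (α p q r : ℝ) (𝒟 : Set (Cube n))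
    (A : Matrix (Fin n) (Fin n) ℝ) (u v : (Fin n → ℝ) → ℝ) : ℝ≥0∞ :=
  ⨆ R : 𝒟, testOutE α p q r 𝒟 A u v R

/-- The dual outer testing constant `𝒯*_{A,r,out,𝒟}`. -/
noncomputable def testOutStarConst (α p q r : ℝ) (𝒟 : Set (Cube n))
    (A : Matrix (Fin n) (Fin n) ℝ) (u v : (Fin n → ℝ) → ℝ) : ℝ≥0∞ :=
  ⨆ R : 𝒟, testOutStarE α p q r 𝒟 A u v R

/-- The grand maximal truncated operator `M_T` (for `m = 2`). -/
noncomputable def grandMax (T : ((Fin n → ℝ) → ℝ) → (Fin n → ℝ) → ℝ)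
    (A1 A2 : Matrix (Fin n) (Fin n) ℝ) (f : (Fin n → ℝ) → ℝ) (x : Fin n → ℝ) : ℝ≥0∞ :=
  ⨆ P : {P : Cube n × Cube n // A1⁻¹.mulVec x ∈ P.1.set ∧ A2⁻¹.mulVec x ∈ P.2.set},
    essSup (fun ξ => ENNReal.ofReal
        |T (Set.indicator ((P.1.1.tri.set ∪ P.1.2.tri.set)ᶜ) f) ξ|)
      (volume.restrict (P.1.1.set ∪ P.1.2.set))

/-- The local grand maximal truncated operator `M_{T,Q₀¹∪Q₀²}` (for `m = 2`). -/
noncomputable def locGrandMax (T : ((Fin n → ℝ) → ℝ) → (Fin n → ℝ) → ℝ)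
    (A1 A2 : Matrix (Fin n) (Fin n) ℝ) (Q01 Q02 : Cube n)
    (f : (Fin n → ℝ) → ℝ) (x : Fin n → ℝ) : ℝ≥0∞ :=
  ⨆ P : {P : Cube n × Cube n // (A1⁻¹.mulVec x ∈ P.1.set ∧ Q01.set ⊆ P.1.set) ∧
      (A2⁻¹.mulVec x ∈ P.2.set ∧ Q02.set ⊆ P.2.set)},
    essSup (fun ξ => ENNReal.ofReal
        |T (Set.indicator ((Q01.tri.set ∪ Q02.tri.set) \ (P.1.1.tri.set ∪ P.1.2.tri.set)) f) ξ|)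
      (volume.restrict (P.1.1.set ∪ P.1.2.set))

end Paper

/-!
Testing the `𝒜_{A,p,q}` condition on the cube centred at `x` with half-side `r`, which is the
sup-norm ball `closedBall x r` up to a null set, bounds the product of the averages of `w(A·)^q`
and `w^{-p'}` over every ball by `[w]`. By Lebesgue differentiation these averages tend to
`w(Ax)^q` and `w(x)^{-p'}` at almost every `x`, whence `w(Ax) w(x)⁻¹ ≤ [w]` a.e. Neither power
need be locally integrable, so differentiation is applied to the truncations `min(f, k)`
restricted to large balls; these only bound the averages from below, which is all an upper
bound on the limit needs.
-/

open Filter Metric Topology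

lemma ENNReal.iSup_inf_natCast_rpow (a : ℝ≥0∞) {s : ℝ} (hs : 0 < s) :
    ⨆ k : ℕ, (a ⊓ k) ^ s = a ^ s := by
  have hsup : ⨆ k : ℕ, a ⊓ k = a := by rw [← inf_iSup_eq, iSup_natCast, inf_top_eq]
  conv_rhs => rw [← hsup]
  exact (Monotone.map_iSup_of_continuousAt (ENNReal.continuous_rpow_const.continuousAt)
    (ENNReal.monotone_rpow_of_nonneg hs.le) (ENNReal.zero_rpow_of_pos hs)).symm

section LebesgueDifferentiation

variable {E : Type*} [NormedAddCommGroup E] [NormedSpace ℝ E] [FiniteDimensional ℝ E]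
  [MeasurableSpace E] [BorelSpace E] {μ : Measure E} [IsLocallyFiniteMeasure μ]

theorem ae_tendsto_lintegral_closedBall_div {f : E → ℝ≥0∞} (hf : AEMeasurable f μ)
    (hfin : ∫⁻ y, f y ∂μ ≠ ∞) :
    ∀ᵐ x ∂μ, Tendsto (fun r => (∫⁻ y in closedBall x r, f y ∂μ) / μ (closedBall x r))
      (𝓝[>] 0) (𝓝 (f x)) := by
  filter_upwards [(Besicovitch.vitaliFamily μ).ae_tendsto_lintegral_div hf hfin] with x hx
  exact hx.comp (Besicovitch.tendsto_filterAt μ x)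

/-- Truncating `f` in height and to a large ball makes Lebesgue differentiation applicable
without any integrability of `f`. -/
theorem ae_exists_tendsto_inf_natCast_le_average_closedBall {f : E → ℝ≥0∞}
    (hf : AEMeasurable f μ) :
    ∀ᵐ x ∂μ, ∀ k : ℕ, ∃ u : ℝ → ℝ≥0∞, Tendsto u (𝓝[>] 0) (𝓝 (f x ⊓ k)) ∧
      ∀ r, u r ≤ (∫⁻ y in closedBall x r, f y ∂μ) / μ (closedBall x r) := by
  set F : ℕ → ℕ → E → ℝ≥0∞ := fun k m => (ball 0 m).indicator fun y => f y ⊓ k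
  have hF : ∀ k m, ∀ᵐ x ∂μ, Tendsto
      (fun r => (∫⁻ y in closedBall x r, F k m y ∂μ) / μ (closedBall x r))
      (𝓝[>] 0) (𝓝 (F k m x)) := by
    intro k m
    refine ae_tendsto_lintegral_closedBall_div
      ((hf.inf aemeasurable_const).indicator measurableSet_ball) (ne_of_lt ?_)
    calc ∫⁻ y, F k m y ∂μ = ∫⁻ y in ball 0 m, f y ⊓ k ∂μ :=
          lintegral_indicator measurableSet_ball _
      _ ≤ ∫⁻ _ in ball 0 m, (k : ℝ≥0∞) ∂μ := lintegral_mono fun _ => inf_le_right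
      _ = k * μ (ball 0 m) := setLIntegral_const _ _
      _ < ∞ := ENNReal.mul_lt_top (natCast_lt_top k) measure_ball_lt_top
  filter_upwards [ae_all_iff.2 fun k => ae_all_iff.2 (hF k)] with x hx k
  obtain ⟨m, hm⟩ := exists_nat_gt ‖x‖
  have hxm : x ∈ ball (0 : E) m := mem_ball_zero_iff.2 hm
  refine ⟨_, by simpa only [F, indicator_of_mem hxm] using hx k m, fun r => ?_⟩
  gcongr with y
  exact (indicator_le_self' (fun _ _ => zero_le) y).trans inf_le_left

theorem ae_rpow_mul_rpow_le_of_average_closedBall_le {f g : E → ℝ≥0∞} (hf : AEMeasurable f μ)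
    (hg : AEMeasurable g μ) {s t : ℝ} (hs : 0 < s) (ht : 0 < t) {C : ℝ≥0∞}
    (hC : ∀ x, ∀ r > 0,
      ((∫⁻ y in closedBall x r, f y ∂μ) / μ (closedBall x r)) ^ s *
        ((∫⁻ y in closedBall x r, g y ∂μ) / μ (closedBall x r)) ^ t ≤ C) :
    ∀ᵐ x ∂μ, f x ^ s * g x ^ t ≤ C := by
  filter_upwards [ae_exists_tendsto_inf_natCast_le_average_closedBall hf,
    ae_exists_tendsto_inf_natCast_le_average_closedBall hg] with x hfx hgx
  have htrunc : ∀ k j : ℕ, (f x ⊓ k) ^ s * (g x ⊓ j) ^ t ≤ C := by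
    intro k j
    obtain ⟨u, hu, hu_le⟩ := hfx k
    obtain ⟨v, hv, hv_le⟩ := hgx j
    have hfin : ∀ (a : ℝ≥0∞) (i : ℕ) {e : ℝ}, 0 < e → (a ⊓ i) ^ e ≠ ∞ := fun a i e he =>
      (rpow_lt_top_of_nonneg he.le (inf_le_right.trans_lt (natCast_lt_top i)).ne).ne
    have hlim := ENNReal.Tendsto.mul
      ((ENNReal.continuous_rpow_const.tendsto _).comp hu) (Or.inr (hfin _ j ht))
      ((ENNReal.continuous_rpow_const.tendsto _).comp hv) (Or.inr (hfin _ k hs))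
    refine le_of_tendsto hlim ?_
    filter_upwards [self_mem_nhdsWithin] with r (hr : 0 < r)
    exact (mul_le_mul' (rpow_le_rpow (hu_le r) hs.le) (rpow_le_rpow (hv_le r) ht.le)).trans
      (hC x r hr)
  rw [← iSup_inf_natCast_rpow _ hs, ← iSup_inf_natCast_rpow _ ht, ENNReal.iSup_mul]
  exact iSup_le fun k => by rw [ENNReal.mul_iSup]; exact iSup_le (htrunc k)

end LebesgueDifferentiation

theorem AEMeasurable.comp_mulVec {n : ℕ} {f : (Fin n → ℝ) → ℝ} (hf : AEMeasurable f)
    {A : Matrix (Fin n) (Fin n) ℝ} (hA : A.det ≠ 0) : AEMeasurable fun x => f (A.mulVec x) :=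
  hf.comp_quasiMeasurePreserving
    (Measure.LinearMap.quasiMeasurePreserving volume (Matrix.toLin' A)
      (by rwa [LinearMap.det_toLin']))

namespace Paper

variable {n : ℕ}

namespace Cube

def centered (x : Fin n → ℝ) {r : ℝ} (hr : 0 < r) : Cube n :=
  ⟨fun i => x i - r, 2 * r, by linarith⟩

theorem set_eq_pi (Q : Cube n) :
    Q.set = univ.pi fun i => Ico (Q.corner i) (Q.corner i + Q.side) := by
  ext x; simp [Cube.set]

-- `Fin n → ℝ` carries the sup norm, so its balls are cubes.
theorem set_centered_ae_eq_closedBall (x : Fin n → ℝ) {r : ℝ} (hr : 0 < r) :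
    (centered x hr).set =ᵐ[volume] closedBall x r := by
  rw [set_eq_pi, closedBall_pi x hr.le, volume_pi]
  refine Measure.ae_eq_set_pi fun i _ => ?_
  rw [Real.closedBall_eq_Icc, centered, show x i - r + 2 * r = x i + r by ring]
  exact Ico_ae_eq_Icc

theorem ofReal_vol_centered (x : Fin n → ℝ) {r : ℝ} (hr : 0 < r) :
    ENNReal.ofReal (centered x hr).vol = volume (closedBall x r) := by
  rw [Real.volume_pi_closedBall x hr.le, Fintype.card_fin]; rfl

end Cube

theorem apqE_centered_eq (A : Matrix (Fin n) (Fin n) ℝ) {p : ℝ} (hp : p ≠ 1) (q : ℝ)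
    (w : (Fin n → ℝ) → ℝ) (x : Fin n → ℝ) {r : ℝ} (hr : 0 < r) :
    apqE A p q w (Cube.centered x hr) =
      ((∫⁻ y in closedBall x r, ENNReal.ofReal (w (A.mulVec y)) ^ q) / volume (closedBall x r))
          ^ (1 / q) *
        ((∫⁻ y in closedBall x r, ENNReal.ofReal (w y) ^ (-conj p)) / volume (closedBall x r))
          ^ (1 / conj p) := by
  simp only [apqE, if_neg hp, Cube.ofReal_vol_centered,
    setLIntegral_congr (Cube.set_centered_ae_eq_closedBall x hr), ENNReal.div_eq_inv_mul]

theorem conj_pos {p : ℝ} (hp : 1 < p) : 0 < conj p := div_pos (by linarith) (by linarith)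

theorem pos_of_one_div_eq_sub {α p q : ℝ} (hp : 1 < p) (hpα : α = 0 ∨ p < (n : ℝ) / α)
    (hq : 1 / q = 1 / p - α / n) : 0 < q := by
  rw [← one_div_pos, hq, sub_pos]
  rcases hpα with rfl | hlt
  · simp only [zero_div]; positivity
  rcases lt_trichotomy α 0 with hα | rfl | hα
  · have : (n : ℝ) / α ≤ 0 := div_nonpos_of_nonneg_of_nonpos n.cast_nonneg hα.le
    linarith
  · simp only [zero_div]; positivity
  · rw [lt_div_iff₀ hα] at hlt
    rw [div_lt_div_iff₀ (by linarith [mul_pos (by linarith : (0:ℝ) < p) hα]) (by linarith)]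
    linarith

theorem apq_implies_wA_le_general (n : ℕ) (α p q : ℝ)
    (hp : 1 < p) (hpα : α = 0 ∨ p < (n : ℝ) / α)
    (hq : 1 / q = 1 / p - α / (n : ℝ))
    (A : Matrix (Fin n) (Fin n) ℝ) (hA : A.det ≠ 0)
    (w : (Fin n → ℝ) → ℝ) (hwl : LocallyIntegrable w volume)
    (hmem : MemApq A p q w) :
    ∀ᵐ x ∂(volume : Measure (Fin n → ℝ)),
      ENNReal.ofReal (w (A.mulVec x)) ≤ apqConst A p q w * ENNReal.ofReal (w x) := by
  have hq₀ : 0 < q := pos_of_one_div_eq_sub hp hpα hq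
  have hp' : 0 < conj p := conj_pos hp
  have hw : AEMeasurable w := hwl.aestronglyMeasurable.aemeasurable
  have hball : ∀ x, ∀ r > 0,
      ((∫⁻ y in closedBall x r, ENNReal.ofReal (w (A.mulVec y)) ^ q) / volume (closedBall x r))
          ^ (1 / q) *
        ((∫⁻ y in closedBall x r, ENNReal.ofReal (w y) ^ (-conj p)) / volume (closedBall x r))
          ^ (1 / conj p) ≤ apqConst A p q w := fun x r hr =>
    apqE_centered_eq A hp.ne' q w x hr ▸ le_iSup (apqE A p q w) (Cube.centered x hr)
  filter_upwards [ae_rpow_mul_rpow_le_of_average_closedBall_le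
    ((hw.comp_mulVec hA).ennreal_ofReal.pow_const q) (hw.ennreal_ofReal.pow_const (-conj p))
    (one_div_pos.2 hq₀) (one_div_pos.2 hp') hball] with x hx
  rw [← ENNReal.rpow_mul, ← ENNReal.rpow_mul, mul_one_div_cancel hq₀.ne', neg_mul,
    mul_one_div_cancel hp'.ne', ENNReal.rpow_one, ENNReal.rpow_neg_one, ← div_eq_mul_inv] at hx
  exact (ENNReal.div_le_iff_le_mul (Or.inr hmem.ne) (Or.inl ofReal_ne_top)).1 hx

/-- If `w ∈ 𝒜_{A,p,q}` then `w(Ax) ≤ [w]_{𝒜_{A,p,q}} w(x)` a.e. -/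
theorem apq_implies_wA_le (n : ℕ) (hn : 0 < n) (α p q : ℝ)
    (hα : 0 ≤ α) (hαn : α < n) (hp : 1 < p) (hpα : α = 0 ∨ p < (n : ℝ) / α)
    (hq : 1 / q = 1 / p - α / (n : ℝ))
    (A : Matrix (Fin n) (Fin n) ℝ) (hA : A.det ≠ 0)
    (w : (Fin n → ℝ) → ℝ) (hw : ∀ x, 0 ≤ w x) (hwl : LocallyIntegrable w volume)
    (hmem : MemApq A p q w) :
    ∀ᵐ x ∂(volume : Measure (Fin n → ℝ)),
      ENNReal.ofReal (w (A.mulVec x)) ≤ apqConst A p q w * ENNReal.ofReal (w x) :=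
  apq_implies_wA_le_general n α p q hp hpα hq A hA w hwl hmem

end Paper
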